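/- arXiv:math/0402357 — 4 statements merged into one kernel-verified Lean document; each statement's English description precedes it below -/
import Mathlib

section
/- Euler–Lagrange necessary condition: if f(x,y,p) is C², y : [a,b] → ℝ is C² and minimizes I[y] = ∫_a^b f(x, y(x), y'(x)) dx among all C² functions with the same endpoint values y(a), y(b), then ∂f/∂y (x, y(x), y'(x)) − d/dx [∂f/∂p (x, y(x), y'(x))] = 0 for all x in [a,b]. -/
/-!
Perturb the minimizer `y` by `ε • η` with `η` vanishing at `a` and `b`. The action of the
perturbed curve is minimal at `ε = 0`, and differentiating under the integral sign shows that its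
derivative there is `∫ η f_y + η' f_p`, which therefore vanishes. Integrating the second term by
parts gives `∫ η (f_y - (f_p)') = 0` for every such `η`, and since `f_y - (f_p)'` is continuous,
the fundamental lemma of the calculus of variations makes it vanish on `[a, b]`.
-/

open MeasureTheory Set Filter Metric
open scoped ContDiff

theorem eqOn_zero_of_forall_integral_smul_eq_zero {F : Type*} [NormedAddCommGroup F]
    [NormedSpace ℝ F] [CompleteSpace F] {E : ℝ → F} {a b : ℝ} (hab : a < b)
    (hE : ContinuousOn E (Icc a b))
    (h : ∀ η : ℝ → ℝ, ContDiff ℝ ∞ η → HasCompactSupport η → tsupport η ⊆ Ioo a b →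
      ∫ x in a..b, η x • E x = 0) :
    EqOn E 0 (Icc a b) := by
  have hae : ∀ᵐ x, x ∈ Ioo a b → E x = 0 :=
    isOpen_Ioo.ae_eq_zero_of_integral_contDiff_smul_eq_zero
      ((hE.mono Ioo_subset_Icc_self).locallyIntegrableOn measurableSet_Ioo)
      fun η hη hη_cpt hη_supp => by
        rw [← h η hη hη_cpt hη_supp, intervalIntegral.integral_of_le hab.le,
          setIntegral_eq_integral_of_forall_compl_eq_zero fun x hx => ?_]
        rw [image_eq_zero_of_notMem_tsupport fun hx' => hx (Ioo_subset_Ioc_self (hη_supp hx')),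
          zero_smul]
  have hIoo : EqOn E 0 (Ioo a b) :=
    Measure.eqOn_open_of_ae_eq ((ae_restrict_iff' measurableSet_Ioo).2 hae) isOpen_Ioo
      (hE.mono Ioo_subset_Icc_self) continuousOn_const
  exact hIoo.of_subset_closure hE continuousOn_const Ioo_subset_Icc_self (closure_Ioo hab.ne).ge

theorem hasDerivAt_intervalIntegral_comp_add_smul {E F : Type*} [NormedAddCommGroup E]
    [NormedSpace ℝ E] [NormedAddCommGroup F] [NormedSpace ℝ F] {L : E → F}
    (hL : ContDiff ℝ 1 L) {γ δ : ℝ → E} (hγ : Continuous γ) (hδ : Continuous δ) (a b : ℝ) :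
    HasDerivAt (fun ε : ℝ => ∫ x in a..b, L (γ x + ε • δ x))
      (∫ x in a..b, fderiv ℝ L (γ x) (δ x)) 0 := by
  set L' : ℝ → ℝ → F := fun ε x => fderiv ℝ L (γ x + ε • δ x) (δ x)
  have hL'_cont : Continuous fun p : ℝ × ℝ => L' p.1 p.2 :=
    ((hL.continuous_fderiv one_ne_zero).comp ((hγ.comp continuous_snd).add
      (continuous_fst.smul (hδ.comp continuous_snd)))).clm_apply (hδ.comp continuous_snd)
  obtain ⟨C, hC⟩ := (isCompact_closedBall (0 : ℝ) 1).prod (isCompact_uIcc (a := a) (b := b))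
    |>.exists_bound_of_continuousOn hL'_cont.continuousOn
  have hF_cont (ε : ℝ) : Continuous fun x => L (γ x + ε • δ x) :=
    hL.continuous.comp (hγ.add (hδ.const_smul ε))
  refine (intervalIntegral.hasDerivAt_integral_of_dominated_loc_of_deriv_le
    (ball_mem_nhds 0 one_pos) (.of_forall fun ε => (hF_cont ε).aestronglyMeasurable)
    ((hF_cont 0).intervalIntegrable a b)
    (hL'_cont.comp (.prodMk_right 0)).aestronglyMeasurable
    (.of_forall fun x hx ε hε => hC (ε, x) ⟨ball_subset_closedBall hε, uIoc_subset_uIcc hx⟩)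
    intervalIntegrable_const (.of_forall fun x _ ε _ => ?_)).2.congr_deriv (by simp [L'])
  have hcurve : HasDerivAt (fun ε : ℝ => γ x + ε • δ x) (δ x) ε := by
    simpa using ((hasDerivAt_id ε).smul_const (δ x)).const_add (γ x)
  exact ((hL.differentiable one_ne_zero).differentiableAt.hasFDerivAt).comp_hasDerivAt ε hcurve

theorem hasDerivAt_comp_mk_mid {L : ℝ × ℝ × ℝ → ℝ} {x s p : ℝ}
    (hL : DifferentiableAt ℝ L (x, s, p)) :
    HasDerivAt (fun s => L (x, s, p)) (fderiv ℝ L (x, s, p) (0, 1, 0)) s :=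
  hL.hasFDerivAt.comp_hasDerivAt s
    ((hasDerivAt_const s x).prodMk ((hasDerivAt_id s).prodMk (hasDerivAt_const s p)))

theorem hasDerivAt_comp_mk_last {L : ℝ × ℝ × ℝ → ℝ} {x s p : ℝ}
    (hL : DifferentiableAt ℝ L (x, s, p)) :
    HasDerivAt (fun p => L (x, s, p)) (fderiv ℝ L (x, s, p) (0, 0, 1)) p :=
  hL.hasFDerivAt.comp_hasDerivAt p
    ((hasDerivAt_const p x).prodMk ((hasDerivAt_const p s).prodMk (hasDerivAt_id p)))

theorem ContinuousLinearMap.apply_zero_mk {F : Type*} [NormedAddCommGroup F] [NormedSpace ℝ F]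
    (φ : ℝ × ℝ × ℝ →L[ℝ] F) (s p : ℝ) :
    φ (0, s, p) = s • φ (0, 1, 0) + p • φ (0, 0, 1) := by
  have : ((0, s, p) : ℝ × ℝ × ℝ) = s • (0, 1, 0) + p • (0, 0, 1) := by simp
  rw [this, map_add, map_smul, map_smul]

section EulerLagrange

variable {L : ℝ × ℝ × ℝ → ℝ} {a b : ℝ} {y η : ℝ → ℝ}

noncomputable def action (L : ℝ × ℝ × ℝ → ℝ) (a b : ℝ) (u : ℝ → ℝ) : ℝ :=
  ∫ x in a..b, L (x, u x, deriv u x)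

noncomputable def eulerLagrange (L : ℝ × ℝ × ℝ → ℝ) (y : ℝ → ℝ) (x : ℝ) : ℝ :=
  deriv (fun s => L (x, s, deriv y x)) (y x)
    - deriv (fun t => deriv (fun p => L (t, y t, p)) (deriv y t)) x

theorem eulerLagrange_eq_fderiv (hL : Differentiable ℝ L) (y : ℝ → ℝ) :
    eulerLagrange L y = fun x => fderiv ℝ L (x, y x, deriv y x) (0, 1, 0)
      - deriv (fun t => fderiv ℝ L (t, y t, deriv y t) (0, 0, 1)) x := by
  funext x
  simp only [eulerLagrange, (hasDerivAt_comp_mk_mid (hL _)).deriv,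
    (hasDerivAt_comp_mk_last (hL _)).deriv]

theorem contDiff_fderiv_apply_jet (hL : ContDiff ℝ 2 L) (hy : ContDiff ℝ 2 y) (v : ℝ × ℝ × ℝ) :
    ContDiff ℝ 1 fun t => fderiv ℝ L (t, y t, deriv y t) v :=
  ((hL.fderiv_right one_add_one_eq_two.le).comp (contDiff_id.prodMk
    ((hy.of_le one_le_two).prodMk (hy.deriv' (n := 1))))).clm_apply contDiff_const

theorem continuous_eulerLagrange (hL : ContDiff ℝ 2 L) (hy : ContDiff ℝ 2 y) :
    Continuous (eulerLagrange L y) := by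
  rw [eulerLagrange_eq_fderiv (hL.differentiable two_ne_zero)]
  exact (contDiff_fderiv_apply_jet hL hy _).continuous.sub
    ((contDiff_fderiv_apply_jet hL hy _).continuous_deriv le_rfl)

theorem hasDerivAt_action_add_smul (hL : ContDiff ℝ 1 L) (hy : ContDiff ℝ 1 y)
    (hη : ContDiff ℝ 1 η) :
    HasDerivAt (fun ε : ℝ => action L a b (y + ε • η))
      (∫ x in a..b, fderiv ℝ L (x, y x, deriv y x) (0, η x, deriv η x)) 0 := by
  have hderiv (ε : ℝ) : deriv (y + ε • η) = deriv y + ε • deriv η := by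
    funext x
    exact ((hy.differentiable one_ne_zero x).hasDerivAt.add
      ((hη.differentiable one_ne_zero x).hasDerivAt.const_smul ε)).deriv
  have := hasDerivAt_intervalIntegral_comp_add_smul hL
    (γ := fun x => (x, y x, deriv y x)) (δ := fun x => (0, η x, deriv η x))
    (continuous_id.prodMk (hy.continuous.prodMk (hy.continuous_deriv le_rfl)))
    (continuous_const.prodMk (hη.continuous.prodMk (hη.continuous_deriv le_rfl))) a b
  refine this.congr_of_eventuallyEq (.of_forall fun ε => ?_)
  simp [action, hderiv]

theorem integral_fderiv_apply_eq_zero_of_minimizer (hL : ContDiff ℝ 1 L) (hy : ContDiff ℝ 2 y)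
    (hmin : ∀ u : ℝ → ℝ, ContDiff ℝ 2 u → u a = y a → u b = y b →
      action L a b y ≤ action L a b u)
    (hη : ContDiff ℝ 2 η) (hηa : η a = 0) (hηb : η b = 0) :
    ∫ x in a..b, fderiv ℝ L (x, y x, deriv y x) (0, η x, deriv η x) = 0 := by
  refine IsLocalMin.hasDerivAt_eq_zero (.of_forall fun ε => ?_)
    (hasDerivAt_action_add_smul hL (hy.of_le one_le_two) (hη.of_le one_le_two))
  simpa only [zero_smul, add_zero] using
    hmin (y + ε • η) (hy.add (hη.const_smul ε)) (by simp [hηa]) (by simp [hηb])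

theorem integral_mul_eulerLagrange_eq_zero (hL : ContDiff ℝ 2 L) (hy : ContDiff ℝ 2 y)
    (hmin : ∀ u : ℝ → ℝ, ContDiff ℝ 2 u → u a = y a → u b = y b →
      action L a b y ≤ action L a b u)
    (hη : ContDiff ℝ 2 η) (hηa : η a = 0) (hηb : η b = 0) :
    ∫ x in a..b, η x * eulerLagrange L y x = 0 := by
  set Fy : ℝ → ℝ := fun t => fderiv ℝ L (t, y t, deriv y t) (0, 1, 0)
  set Fp : ℝ → ℝ := fun t => fderiv ℝ L (t, y t, deriv y t) (0, 0, 1)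
  have hFy : Continuous Fy := (contDiff_fderiv_apply_jet hL hy _).continuous
  have hFp : ContDiff ℝ 1 Fp := contDiff_fderiv_apply_jet hL hy _
  have hη1 : ContDiff ℝ 1 η := hη.of_le one_le_two
  have hfirst : ∫ x in a..b, (η x * Fy x + Fp x * deriv η x) = 0 := by
    rw [← integral_fderiv_apply_eq_zero_of_minimizer (hL.of_le one_le_two) hy hmin hη hηa hηb]
    refine intervalIntegral.integral_congr fun x _ => ?_
    simp only [Fy, Fp, ContinuousLinearMap.apply_zero_mk _ (η x), smul_eq_mul]
    ring
  have hη_cont := hη1.continuous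
  have hη'_cont := hη1.continuous_deriv le_rfl
  have hFp'_cont := hFp.continuous_deriv le_rfl
  have hparts : ∫ x in a..b, deriv Fp x * η x + Fp x * deriv η x = 0 := by
    rw [intervalIntegral.integral_deriv_mul_eq_sub
      (fun x _ => (hFp.differentiable one_ne_zero x).hasDerivAt)
      (fun x _ => (hη1.differentiable one_ne_zero x).hasDerivAt)
      (hFp'_cont.intervalIntegrable a b) (hη'_cont.intervalIntegrable a b), hηa, hηb]
    ring
  have hint {g : ℝ → ℝ} (hg : Continuous g) : IntervalIntegrable g volume a b :=
    hg.intervalIntegrable a b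
  calc ∫ x in a..b, η x * eulerLagrange L y x
      = ∫ x in a..b, (η x * Fy x + Fp x * deriv η x) - (deriv Fp x * η x + Fp x * deriv η x) :=
        intervalIntegral.integral_congr fun x _ => by
          simp only [eulerLagrange_eq_fderiv (hL.differentiable two_ne_zero), Fy, Fp]; ring
    _ = (∫ x in a..b, η x * Fy x + Fp x * deriv η x)
          - ∫ x in a..b, deriv Fp x * η x + Fp x * deriv η x :=
        intervalIntegral.integral_sub (hint (by fun_prop)) (hint (by fun_prop))
    _ = 0 := by rw [hfirst, hparts, sub_zero]

end EulerLagrange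

/-- Euler–Lagrange necessary condition for a C² minimizer. -/
theorem euler_lagrange_necessary (f : ℝ → ℝ → ℝ → ℝ)
    (hf : ContDiff ℝ 2 (fun q : ℝ × ℝ × ℝ => f q.1 q.2.1 q.2.2))
    (a b : ℝ) (hab : a < b) (y : ℝ → ℝ) (hy : ContDiff ℝ 2 y)
    (hmin : ∀ u : ℝ → ℝ, ContDiff ℝ 2 u → u a = y a → u b = y b →
      (∫ x in a..b, f x (y x) (deriv y x)) ≤ ∫ x in a..b, f x (u x) (deriv u x)) :
    ∀ x ∈ Set.Icc a b,
      deriv (fun s => f x s (deriv y x)) (y x)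
        - deriv (fun t => deriv (fun p => f t (y t) p) (deriv y t)) x = 0 :=
  eqOn_zero_of_forall_integral_smul_eq_zero hab (continuous_eulerLagrange hf hy).continuousOn
    fun _ hη _ hη_supp => integral_mul_eulerLagrange_eq_zero hf hy hmin
      (hη.of_le ENat.LEInfty.out)
      (image_eq_zero_of_notMem_tsupport fun ha => (hη_supp ha).1.false)
      (image_eq_zero_of_notMem_tsupport fun hb => (hη_supp hb).2.false)
end

section
/- First variation formula: with f C² and y, η C² on [a,b] with η(a) = η(b) = 0, the derivative at ε = 0 of ε ↦ ∫_a^b f(x, y(x)+ε·η(x), y'(x)+ε·η'(x)) dx equals ∫_a^b [f_y(x,y,y') − d/dx f_{y'}(x,y,y')] η(x) dx. -/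
/-!
Differentiating under the integral sign, which is legitimate because the `ε`-derivative of
the integrand is jointly continuous and hence bounded on compact sets, gives the first
variation `∫ f_y η + f_{y'} η'`. Integrating the second term by parts, the boundary term
`f_{y'} η` vanishes at `a` and `b`.
-/

open MeasureTheory Set intervalIntegral

theorem hasDerivAt_intervalIntegral_of_continuous_uncurry {E : Type*} [NormedAddCommGroup E]
    [NormedSpace ℝ E] {L L' : ℝ → ℝ → E} (a b ε₀ : ℝ)
    (hL : ∀ ε, Continuous (L ε)) (hL' : Continuous (Function.uncurry L'))
    (hderiv : ∀ ε t, HasDerivAt (fun ε => L ε t) (L' ε t) ε) :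
    HasDerivAt (fun ε => ∫ t in a..b, L ε t) (∫ t in a..b, L' ε₀ t) ε₀ := by
  obtain ⟨C, hC⟩ :=
    (isCompact_closedBall ε₀ 1 |>.prod isCompact_uIcc).exists_bound_of_continuousOn
      hL'.continuousOn
  refine (hasDerivAt_integral_of_dominated_loc_of_deriv_le (bound := fun _ => C)
    (Metric.ball_mem_nhds ε₀ one_pos) (.of_forall fun ε => (hL ε).aestronglyMeasurable)
    ((hL ε₀).intervalIntegrable a b)
    (hL'.comp (Continuous.prodMk_right ε₀)).aestronglyMeasurable ?_ intervalIntegrable_const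
    (.of_forall fun t _ ε _ => hderiv ε t)).2
  exact .of_forall fun t ht ε hε =>
    hC (ε, t) ⟨Metric.ball_subset_closedBall hε, uIoc_subset_uIcc ht⟩

/-- `f_y` and `f_{y'}` for a Lagrangian written as a function of `q = (x, y, y')`. -/
noncomputable def partialY (F : ℝ × ℝ × ℝ → ℝ) (q : ℝ × ℝ × ℝ) : ℝ :=
  deriv (fun s => F (q.1, s, q.2.2)) q.2.1

noncomputable def partialY' (F : ℝ × ℝ × ℝ → ℝ) (q : ℝ × ℝ × ℝ) : ℝ :=
  deriv (fun p => F (q.1, q.2.1, p)) q.2.2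

section Partials

variable {F : ℝ × ℝ × ℝ → ℝ}

theorem partialY_eq_fderiv {q : ℝ × ℝ × ℝ} (hF : DifferentiableAt ℝ F q) :
    partialY F q = fderiv ℝ F q (0, 1, 0) :=
  (hF.hasFDerivAt.comp_hasDerivAt q.2.1
    ((hasDerivAt_const _ q.1).prodMk ((hasDerivAt_id _).prodMk (hasDerivAt_const _ q.2.2)))).deriv

theorem partialY'_eq_fderiv {q : ℝ × ℝ × ℝ} (hF : DifferentiableAt ℝ F q) :
    partialY' F q = fderiv ℝ F q (0, 0, 1) :=
  (hF.hasFDerivAt.comp_hasDerivAt q.2.2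
    ((hasDerivAt_const _ q.1).prodMk ((hasDerivAt_const _ q.2.1).prodMk (hasDerivAt_id _)))).deriv

theorem fderiv_apply_eq_partialY_add_partialY' {q : ℝ × ℝ × ℝ}
    (hF : DifferentiableAt ℝ F q) (v w : ℝ) :
    fderiv ℝ F q (0, v, w) = partialY F q * v + partialY' F q * w := by
  have hvw : ((0 : ℝ), v, w) = v • ((0, 1, 0) : ℝ × ℝ × ℝ) + w • (0, 0, 1) := by simp
  rw [hvw, map_add, map_smul, map_smul, partialY_eq_fderiv hF, partialY'_eq_fderiv hF,
    smul_eq_mul, smul_eq_mul, mul_comm v, mul_comm w]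

theorem contDiff_partialY {m n : WithTop ℕ∞} (hF : ContDiff ℝ n F) (hmn : m + 1 ≤ n) :
    ContDiff ℝ m (partialY F) := by
  have hd : Differentiable ℝ F := hF.differentiable (by rintro rfl; simp at hmn)
  rw [show partialY F = fun q => fderiv ℝ F q (0, 1, 0) from
    funext fun q => partialY_eq_fderiv (hd q)]
  exact (hF.fderiv_right hmn).clm_apply contDiff_const

theorem contDiff_partialY' {m n : WithTop ℕ∞} (hF : ContDiff ℝ n F) (hmn : m + 1 ≤ n) :
    ContDiff ℝ m (partialY' F) := by
  have hd : Differentiable ℝ F := hF.differentiable (by rintro rfl; simp at hmn)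
  rw [show partialY' F = fun q => fderiv ℝ F q (0, 0, 1) from
    funext fun q => partialY'_eq_fderiv (hd q)]
  exact (hF.fderiv_right hmn).clm_apply contDiff_const

end Partials

theorem hasDerivAt_integral_variation {F : ℝ × ℝ × ℝ → ℝ} (hF : ContDiff ℝ 1 F)
    {u u₁ v v₁ : ℝ → ℝ} (hu : Continuous u) (hu₁ : Continuous u₁) (hv : Continuous v)
    (hv₁ : Continuous v₁) (a b : ℝ) :
    HasDerivAt (fun ε => ∫ x in a..b, F (x, u x + ε * v x, u₁ x + ε * v₁ x))
      (∫ x in a..b, partialY F (x, u x, u₁ x) * v x + partialY' F (x, u x, u₁ x) * v₁ x)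
      0 := by
  have hd : Differentiable ℝ F := hF.differentiable one_ne_zero
  have hγ : Continuous fun z : ℝ × ℝ =>
      (z.2, u z.2 + z.1 * v z.2, u₁ z.2 + z.1 * v₁ z.2) := by
    fun_prop
  have key := hasDerivAt_intervalIntegral_of_continuous_uncurry a b 0
    (L := fun ε x => F (x, u x + ε * v x, u₁ x + ε * v₁ x))
    (L' := fun ε x => fderiv ℝ F (x, u x + ε * v x, u₁ x + ε * v₁ x) (0, v x, v₁ x))
    (fun ε => hF.continuous.comp (hγ.comp (Continuous.prodMk_right ε)))
    (((hF.continuous_fderiv one_ne_zero).comp hγ).clm_apply (by fun_prop))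
    (fun ε x => (hd _).hasFDerivAt.comp_hasDerivAt ε ((hasDerivAt_const _ x).prodMk
      (((hasDerivAt_mul_const _).const_add _).prodMk ((hasDerivAt_mul_const _).const_add _))))
  simpa only [zero_mul, add_zero, fderiv_apply_eq_partialY_add_partialY' (hd _)] using key

theorem integral_mul_add_mul_deriv_eq_integral_sub_deriv_mul {A B η : ℝ → ℝ} {a b : ℝ}
    (hA : Continuous A) (hB : ContDiff ℝ 1 B) (hη : ContDiff ℝ 1 η) (ha : η a = 0)
    (hb : η b = 0) :
    ∫ x in a..b, A x * η x + B x * deriv η x = ∫ x in a..b, (A x - deriv B x) * η x := by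
  have hB' := hB.continuous_deriv le_rfl
  have hη' := hη.continuous_deriv le_rfl
  have parts := integral_mul_deriv_eq_deriv_mul (a := a) (b := b)
    (fun x _ => (hB.differentiable one_ne_zero x).hasDerivAt)
    (fun x _ => (hη.differentiable one_ne_zero x).hasDerivAt)
    (hB'.intervalIntegrable a b) (hη'.intervalIntegrable a b)
  rw [ha, hb, mul_zero, mul_zero, sub_zero, zero_sub] at parts
  simp only [sub_mul]
  have hAη : IntervalIntegrable (fun x => A x * η x) volume a b :=
    (hA.mul hη.continuous).intervalIntegrable a b
  have hBη' : IntervalIntegrable (fun x => B x * deriv η x) volume a b :=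
    (hB.continuous.mul hη').intervalIntegrable a b
  have hB'η : IntervalIntegrable (fun x => deriv B x * η x) volume a b :=
    (hB'.mul hη.continuous).intervalIntegrable a b
  rw [integral_add hAη hBη', integral_sub hAη hB'η, parts, sub_eq_add_neg]

theorem first_variation_formula_general (f : ℝ → ℝ → ℝ → ℝ)
    (hf : ContDiff ℝ 2 (fun q : ℝ × ℝ × ℝ => f q.1 q.2.1 q.2.2))
    (a b : ℝ) (y η : ℝ → ℝ)
    (hy : ContDiff ℝ 2 y) (hη : ContDiff ℝ 2 η)
    (hηa : η a = 0) (hηb : η b = 0) :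
    deriv (fun ε : ℝ =>
        ∫ x in a..b, f x (y x + ε * η x) (deriv y x + ε * deriv η x)) 0
      = ∫ x in a..b,
          (deriv (fun s => f x s (deriv y x)) (y x)
            - deriv (fun t => deriv (fun p => f t (y t) p) (deriv y t)) x) * η x := by
  have hy' : ContDiff ℝ 1 (deriv y) := hy.deriv'
  have hη' : ContDiff ℝ 1 (deriv η) := hη.deriv'
  have hγ : ContDiff ℝ 1 fun x => (x, y x, deriv y x) :=
    contDiff_id.prodMk ((hy.of_le one_le_two).prodMk hy')
  have hJ := hasDerivAt_integral_variation (hf.of_le one_le_two) hy.continuous hy'.continuous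
    hη.continuous hη'.continuous a b
  have hFy : ContDiff ℝ 1 (partialY fun q => f q.1 q.2.1 q.2.2) :=
    contDiff_partialY hf le_rfl
  have hFy' : ContDiff ℝ 1 (partialY' fun q => f q.1 q.2.1 q.2.2) :=
    contDiff_partialY' hf le_rfl
  rw [hJ.deriv]
  exact integral_mul_add_mul_deriv_eq_integral_sub_deriv_mul
    (hFy.continuous.comp hγ.continuous) (hFy'.comp hγ) (hη.of_le one_le_two) hηa hηb

/-- First variation formula. -/
theorem first_variation_formula (f : ℝ → ℝ → ℝ → ℝ)
    (hf : ContDiff ℝ 2 (fun q : ℝ × ℝ × ℝ => f q.1 q.2.1 q.2.2))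
    (a b : ℝ) (hab : a < b) (y η : ℝ → ℝ)
    (hy : ContDiff ℝ 2 y) (hη : ContDiff ℝ 2 η)
    (hηa : η a = 0) (hηb : η b = 0) :
    deriv (fun ε : ℝ =>
        ∫ x in a..b, f x (y x + ε * η x) (deriv y x + ε * deriv η x)) 0
      = ∫ x in a..b,
          (deriv (fun s => f x s (deriv y x)) (y x)
            - deriv (fun t => deriv (fun p => f t (y t) p) (deriv y t)) x) * η x :=
  first_variation_formula_general f hf a b y η hy hη hηa hηb
end

section
/- Legendre necessary condition: if f is C² and y is a C² minimizer of I[u] = ∫_a^b f(x,u,u') dx over C¹ functions with fixed endpoint values, then f_{pp}(x, y(x), y'(x)) ≥ 0 for all x in [a,b]. -/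
/-!
Suppose `f_pp < 0` at an interior point `x₀`. Perturb `y` by `φ(x) = ε ψ((x - x₀) / ε)` for a
bump `ψ` supported in `[-1, 1]`: this moves `y` by `O(ε)` but `y'` by `O(1)`. Expanding `f` to
first order in `u` and to second order in `p`, the change of `I` is at most
`O(ε²) + ∫ f_p(x, y, y') ψ'((x - x₀) / ε) dx + ½ ∫ f_pp ψ'((x - x₀) / ε)² dx`. The middle term is
`o(ε)` since `∫ ψ' = 0` and `f_p` is nearly constant near `x₀`, while the last is about
`ε f_pp(x₀) ∫ ψ'² / 2 < 0`, so `y + φ` beats `y` for small `ε`. Continuity then extends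
`f_pp ≥ 0` from `(a, b)` to `[a, b]`.
-/

open MeasureTheory Set Filter Topology

theorem le_add_deriv_add_half_of_deriv2_le {k k' k'' : ℝ → ℝ} {B : ℝ}
    (hk : ∀ t ∈ Icc (0 : ℝ) 1, HasDerivAt k (k' t) t)
    (hk' : ∀ t ∈ Icc (0 : ℝ) 1, HasDerivAt k' (k'' t) t)
    (hB : ∀ t ∈ Icc (0 : ℝ) 1, k'' t ≤ B) : k 1 ≤ k 0 + k' 0 + B / 2 := by
  have hk'_le : ∀ t ∈ Icc (0 : ℝ) 1, k' t ≤ k' 0 + B * t := by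
    refine image_le_of_deriv_right_le_deriv_boundary (f' := k'') (B' := fun _ => B)
      (fun t ht => (hk' t ht).continuousAt.continuousWithinAt)
      (fun t ht => (hk' t (Ico_subset_Icc_self ht)).hasDerivWithinAt) (by simp)
      (by fun_prop) (fun t _ => ?_) (fun t ht => hB t (Ico_subset_Icc_self ht))
    simpa using ((hasDerivAt_id t).const_mul B).const_add (k' 0) |>.hasDerivWithinAt
  have := image_le_of_deriv_right_le_deriv_boundary (f' := k')
    (B := fun t => k 0 + k' 0 * t + B * t ^ 2 / 2) (B' := fun t => k' 0 + B * t)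
    (fun t ht => (hk t ht).continuousAt.continuousWithinAt)
    (fun t ht => (hk t (Ico_subset_Icc_self ht)).hasDerivWithinAt) (by simp)
    (by fun_prop) (fun t _ => ?_) (fun t ht => hk'_le t (Ico_subset_Icc_self ht))
    (right_mem_Icc.2 zero_le_one)
  · linarith
  · exact ((((hasDerivAt_id' t).const_mul (k' 0)).const_add (k 0)).add
      (((hasDerivAt_pow 2 t).const_mul B).div_const 2)).hasDerivWithinAt.congr_deriv
      (by ring)

noncomputable def partialThird (F : ℝ × ℝ × ℝ → ℝ) (q : ℝ × ℝ × ℝ) : ℝ :=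
  fderiv ℝ F q (0, 0, 1)

section PartialThird

variable {F : ℝ × ℝ × ℝ → ℝ}

theorem ContDiff.partialThird {m n : WithTop ℕ∞} (hF : ContDiff ℝ n F) (hmn : m + 1 ≤ n) :
    ContDiff ℝ m (partialThird F) :=
  (hF.fderiv_right hmn).clm_apply contDiff_const

theorem hasDerivAt_partialThird {x u p : ℝ} (hF : DifferentiableAt ℝ F (x, u, p)) :
    HasDerivAt (fun p => F (x, u, p)) (partialThird F (x, u, p)) p :=
  hF.hasFDerivAt.comp_hasDerivAt p
    ((hasDerivAt_const p x).prodMk ((hasDerivAt_const p u).prodMk (hasDerivAt_id p)))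

theorem deriv_deriv_eq_partialThird_partialThird (hF : ContDiff ℝ 2 F) (x u p : ℝ) :
    deriv (fun p => deriv (fun p' => F (x, u, p')) p) p =
      partialThird (partialThird F) (x, u, p) := by
  have hderiv (p : ℝ) : deriv (fun p' => F (x, u, p')) p = partialThird F (x, u, p) :=
    (hasDerivAt_partialThird (hF.differentiable two_ne_zero _)).deriv
  simp_rw [hderiv]
  exact (hasDerivAt_partialThird
    ((hF.partialThird (m := 1) le_rfl).differentiable one_ne_zero _)).deriv

theorem sub_le_partialThird_mul_add_of_partialThird_partialThird_le (hF : ContDiff ℝ 2 F)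
    {x u p σ B : ℝ}
    (hB : ∀ τ ∈ Icc (0 : ℝ) 1, partialThird (partialThird F) (x, u, p + τ * σ) ≤ B) :
    F (x, u, p + σ) - F (x, u, p) ≤ partialThird F (x, u, p) * σ + B * σ ^ 2 / 2 := by
  have hline (τ : ℝ) : HasDerivAt (fun τ : ℝ => p + τ * σ) σ τ := by
    simpa using ((hasDerivAt_id τ).mul_const σ).const_add p
  have hF' : ContDiff ℝ 1 (partialThird F) := hF.partialThird (by norm_num)
  have := le_add_deriv_add_half_of_deriv2_le (k := fun τ => F (x, u, p + τ * σ))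
    (k' := fun τ => partialThird F (x, u, p + τ * σ) * σ)
    (k'' := fun τ => partialThird (partialThird F) (x, u, p + τ * σ) * σ * σ) (B := B * σ ^ 2)
    (fun τ _ => (hasDerivAt_partialThird (hF.differentiable two_ne_zero _)).comp τ (hline τ))
    (fun τ _ => ((hasDerivAt_partialThird (hF'.differentiable one_ne_zero _)).comp τ
      (hline τ)).mul_const σ)
    (fun τ hτ => by nlinarith [hB τ hτ, mul_self_nonneg σ])
  simp only [zero_mul, add_zero, one_mul] at this
  linarith

theorem sub_le_of_convex_of_norm_fderiv_le (hF : ContDiff ℝ 2 F) {s : Set (ℝ × ℝ × ℝ)}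
    (hs : Convex ℝ s) {L B : ℝ} (hL : ∀ q ∈ s, ‖fderiv ℝ F q‖ ≤ L)
    (hB : ∀ q ∈ s, partialThird (partialThird F) q ≤ B) {x u p θ σ : ℝ} (h₀ : (x, u, p) ∈ s)
    (h₁ : (x, u, p + σ) ∈ s) (h₂ : (x, u + θ, p + σ) ∈ s) :
    F (x, u + θ, p + σ) - F (x, u, p) ≤ L * |θ| + partialThird F (x, u, p) * σ + B * σ ^ 2 / 2 := by
  have hmid : F (x, u + θ, p + σ) - F (x, u, p + σ) ≤ L * |θ| := by
    have := hs.norm_image_sub_le_of_norm_fderiv_le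
      (fun q _ => hF.differentiable two_ne_zero q) hL h₁ h₂
    rw [Real.norm_eq_abs] at this
    refine (le_abs_self _).trans (this.trans_eq ?_)
    simp [Prod.norm_def]
  have hpath : F (x, u, p + σ) - F (x, u, p) ≤ partialThird F (x, u, p) * σ + B * σ ^ 2 / 2 := by
    refine sub_le_partialThird_mul_add_of_partialThird_partialThird_le hF fun τ hτ => hB _ ?_
    convert hs.add_smul_sub_mem h₀ h₁ hτ using 1
    simp
  linarith

theorem exists_ball_norm_fderiv_le_and_partialThird_partialThird_le (hF : ContDiff ℝ 2 F)
    (q₀ : ℝ × ℝ × ℝ) {B : ℝ} (hB : partialThird (partialThird F) q₀ < B) :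
    ∃ δ > 0, ∀ q ∈ Metric.ball q₀ δ,
      ‖fderiv ℝ F q‖ ≤ ‖fderiv ℝ F q₀‖ + 1 ∧ partialThird (partialThird F) q ≤ B := by
  have h₁ : Continuous fun q => ‖fderiv ℝ F q‖ := (hF.continuous_fderiv two_ne_zero).norm
  have h₂ : Continuous (partialThird (partialThird F)) :=
    ((hF.partialThird (m := 1) le_rfl).partialThird (m := 0) le_rfl).continuous
  obtain ⟨δ, hδ, h⟩ := Metric.eventually_nhds_iff_ball.1
    ((h₁.continuousAt.eventually_lt continuousAt_const (lt_add_one _)).and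
      (h₂.continuousAt.eventually_lt continuousAt_const hB))
  exact ⟨δ, hδ, fun q hq => ⟨(h q hq).1.le, (h q hq).2.le⟩⟩

theorem sub_le_of_mem_ball (hF : ContDiff ℝ 2 F) {q₀ : ℝ × ℝ × ℝ} {δ L B : ℝ}
    (hball : ∀ q ∈ Metric.ball q₀ δ, ‖fderiv ℝ F q‖ ≤ L ∧ partialThird (partialThird F) q ≤ B)
    {x u p θ σ : ℝ} (hq : dist (x, u, p) q₀ < δ / 2) (hθ : |θ| < δ / 2) (hσ : |σ| < δ / 2) :
    F (x, u + θ, p + σ) - F (x, u, p) ≤ L * |θ| + partialThird F (x, u, p) * σ + B * σ ^ 2 / 2 := by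
  have hδ : 0 < δ / 2 := (abs_nonneg θ).trans_lt hθ
  have hmem {θ' σ' : ℝ} (hθ' : |θ'| < δ / 2) (hσ' : |σ'| < δ / 2) :
      (x, u + θ', p + σ') ∈ Metric.ball q₀ δ := by
    have : dist (x, u + θ', p + σ') (x, u, p) < δ / 2 := by
      simpa [Prod.dist_eq, Real.dist_eq, hδ] using ⟨hθ', hσ'⟩
    exact (dist_triangle _ _ _).trans_lt (by linarith)
  have h0 : |(0 : ℝ)| < δ / 2 := by simpa using hδ
  exact sub_le_of_convex_of_norm_fderiv_le hF (convex_ball q₀ δ) (fun q hq => (hball q hq).1)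
    (fun q hq => (hball q hq).2) (by simpa using hmem h0 h0) (by simpa using hmem h0 hσ)
    (hmem hθ hσ)

end PartialThird

noncomputable def jet (y : ℝ → ℝ) (x : ℝ) : ℝ × ℝ × ℝ :=
  (x, y x, deriv y x)

theorem ContDiff.continuous_jet {y : ℝ → ℝ} (hy : ContDiff ℝ 1 y) : Continuous (jet y) :=
  continuous_id.prodMk (hy.continuous.prodMk (hy.continuous_deriv le_rfl))

theorem exists_bump_profile {r : ℝ} (hr : 0 < r) :
    ∃ ψ : ℝ → ℝ, ContDiff ℝ 1 ψ ∧ (∀ t, 1 ≤ |t| → ψ t = 0) ∧ (∀ t, 1 ≤ |t| → deriv ψ t = 0) ∧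
      (∀ t, |ψ t| ≤ r ∧ |deriv ψ t| ≤ r) ∧ 0 < ∫ t in (-1)..1, deriv ψ t ^ 2 := by
  let b : ContDiffBump (0 : ℝ) := ⟨1 / 2, 1, by norm_num, by norm_num⟩
  obtain ⟨M, hM⟩ := (b.contDiff.continuous_deriv le_rfl).bounded_above_of_compact_support
    b.hasCompactSupport.deriv
  set c := r / max M 1
  have hc : 0 < c := by positivity
  have hcr : c ≤ r := div_le_self hr.le (le_max_right _ _)
  have hψ : ContDiff ℝ 1 (fun t => c * b t) := contDiff_const.mul b.contDiff
  have hderiv (t : ℝ) : deriv (fun t => c * b t) t = c * deriv b t :=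
    deriv_const_mul c (b.contDiff.differentiable one_ne_zero t)
  have hzero (t : ℝ) (ht : 1 ≤ |t|) : c * b t = 0 := by
    rw [b.zero_of_le_dist (by simpa using ht), mul_zero]
  refine ⟨fun t => c * b t, hψ, hzero, fun t ht => ?_, fun t => ⟨?_, ?_⟩, ?_⟩
  · refine IsLocalMin.deriv_eq_zero (Eventually.of_forall fun s => ?_)
    show c * b t ≤ c * b s
    rw [hzero t ht]
    exact mul_nonneg hc.le b.nonneg
  · rw [abs_of_nonneg (mul_nonneg hc.le b.nonneg)]
    exact (mul_le_of_le_one_right hc.le b.le_one).trans hcr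
  · rw [hderiv, abs_mul, abs_of_pos hc]
    calc c * |deriv b t| ≤ c * max M 1 := by gcongr; exact (hM t).trans (le_max_left _ _)
      _ = r := div_mul_cancel₀ r (by positivity)
  · obtain ⟨t, ht, hslope⟩ := exists_deriv_eq_slope (fun t => c * b t) zero_lt_one
      hψ.continuous.continuousOn (hψ.differentiable one_ne_zero).differentiableOn
    have h0 : b 0 = 1 := b.one_of_mem_closedBall (by simp [b])
    refine intervalIntegral.integral_pos (by norm_num)
      ((hψ.continuous_deriv le_rfl).pow 2).continuousOn (fun _ _ => sq_nonneg _)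
      ⟨t, Icc_subset_Icc (by norm_num) le_rfl (Ioo_subset_Icc_self ht), ?_⟩
    rw [hslope, hzero 1 (by simp), h0]
    norm_num
    positivity

theorem one_le_abs_sub_div_of_notMem_Ioo {x x₀ ε : ℝ} (hε : 0 < ε)
    (hx : x ∉ Ioo (x₀ - ε) (x₀ + ε)) : 1 ≤ |(x - x₀) / ε| := by
  rw [abs_div, abs_of_pos hε, one_le_div hε]
  by_contra! h
  rw [abs_sub_lt_iff] at h
  exact hx ⟨by linarith, by linarith⟩

noncomputable def localizedBump (ψ : ℝ → ℝ) (x₀ ε : ℝ) (x : ℝ) : ℝ :=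
  ε * ψ ((x - x₀) / ε)

section LocalizedBump

variable {ψ : ℝ → ℝ} {x₀ ε : ℝ}

theorem ContDiff.localizedBump {n : WithTop ℕ∞} (hψ : ContDiff ℝ n ψ) :
    ContDiff ℝ n (localizedBump ψ x₀ ε) :=
  contDiff_const.mul (hψ.comp ((contDiff_id.sub contDiff_const).div_const ε))

theorem hasDerivAt_localizedBump (hε : ε ≠ 0) {x : ℝ}
    (hψ : DifferentiableAt ℝ ψ ((x - x₀) / ε)) :
    HasDerivAt (localizedBump ψ x₀ ε) (deriv ψ ((x - x₀) / ε)) x :=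
  ((hψ.hasDerivAt.comp x (((hasDerivAt_id' x).sub_const x₀).div_const ε)).const_mul ε
    ).congr_deriv (by field_simp)

theorem localizedBump_eq_zero (hψ : ∀ t, 1 ≤ |t| → ψ t = 0) (hε : 0 < ε) {x : ℝ}
    (hx : x ∉ Ioo (x₀ - ε) (x₀ + ε)) : localizedBump ψ x₀ ε x = 0 := by
  rw [localizedBump, hψ _ (one_le_abs_sub_div_of_notMem_Ioo hε hx), mul_zero]

theorem intervalIntegral.integral_comp_sub_div_eq_mul (G : ℝ → ℝ) (hε : ε ≠ 0) :
    ∫ x in (x₀ - ε)..(x₀ + ε), G ((x - x₀) / ε) = ε * ∫ t in (-1)..1, G t := by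
  simp_rw [sub_div]
  rw [intervalIntegral.integral_comp_div_sub (f := G) hε, smul_eq_mul]
  congr 2 <;> field_simp <;> ring

end LocalizedBump

theorem intervalIntegral.integral_eq_integral_of_eq_zero_of_notMem_Ioo {G : ℝ → ℝ}
    {a b l r : ℝ} (hal : a ≤ l) (hrb : r ≤ b) (hG : ∀ x ∉ Ioo l r, G x = 0) :
    ∫ x in a..b, G x = ∫ x in l..r, G x := by
  have hsupp : Function.support G ⊆ Ioc l r := fun x hx =>
    Ioo_subset_Ioc_self (by_contra fun h => hx (hG x h))
  rw [intervalIntegral.integral_eq_integral_of_support_subset hsupp,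
    intervalIntegral.integral_eq_integral_of_support_subset
      (hsupp.trans (Ioc_subset_Ioc hal hrb))]

theorem integral_le_of_le_comp_deriv {ψ G : ℝ → ℝ} (hψ : ContDiff ℝ 1 ψ) (hψ₁ : ψ (-1) = ψ 1)
    {x₀ ε K C B : ℝ} (hε : 0 < ε) (hG : IntervalIntegrable G volume (x₀ - ε) (x₀ + ε))
    (hle : ∀ x ∈ Icc (x₀ - ε) (x₀ + ε),
      G x ≤ K + C * deriv ψ ((x - x₀) / ε) + B * deriv ψ ((x - x₀) / ε) ^ 2) :
    ∫ x in (x₀ - ε)..(x₀ + ε), G x ≤ 2 * ε * K + B * ε * ∫ t in (-1)..1, deriv ψ t ^ 2 := by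
  have hψ' : Continuous (deriv ψ) := hψ.continuous_deriv le_rfl
  have hψ'_int : ∫ t in (-1)..1, deriv ψ t = 0 := by
    rw [intervalIntegral.integral_deriv_eq_sub (fun t _ => hψ.differentiable one_ne_zero t)
      (hψ'.intervalIntegrable _ _), hψ₁, sub_self]
  calc ∫ x in (x₀ - ε)..(x₀ + ε), G x
      ≤ ∫ x in (x₀ - ε)..(x₀ + ε),
          (K + C * deriv ψ ((x - x₀) / ε) + B * deriv ψ ((x - x₀) / ε) ^ 2) :=
        intervalIntegral.integral_mono_on (by linarith) hG
          (Continuous.intervalIntegrable (by fun_prop) _ _) hle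
    _ = 2 * ε * K + C * (ε * ∫ t in (-1)..1, deriv ψ t) +
          B * (ε * ∫ t in (-1)..1, deriv ψ t ^ 2) := by
        rw [intervalIntegral.integral_add (Continuous.intervalIntegrable (by fun_prop) _ _)
            (Continuous.intervalIntegrable (by fun_prop) _ _),
          intervalIntegral.integral_add (Continuous.intervalIntegrable (by fun_prop) _ _)
            (Continuous.intervalIntegrable (by fun_prop) _ _),
          intervalIntegral.integral_const, intervalIntegral.integral_const_mul,
          intervalIntegral.integral_const_mul,
          intervalIntegral.integral_comp_sub_div_eq_mul _ hε.ne',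
          intervalIntegral.integral_comp_sub_div_eq_mul (fun t => deriv ψ t ^ 2) hε.ne',
          smul_eq_mul]
        ring
    _ = 2 * ε * K + B * ε * ∫ t in (-1)..1, deriv ψ t ^ 2 := by rw [hψ'_int]; ring

theorem integral_sub_le_of_localizedBump {F : ℝ × ℝ × ℝ → ℝ} (hF : ContDiff ℝ 2 F)
    {y ψ : ℝ → ℝ} (hy : ContDiff ℝ 1 y) (hψ : ContDiff ℝ 1 ψ)
    (hψ_zero : ∀ t, 1 ≤ |t| → ψ t = 0) (hψ'_zero : ∀ t, 1 ≤ |t| → deriv ψ t = 0)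
    {a b x₀ ε δ r L B η : ℝ}
    (hψ_le : ∀ t, |ψ t| ≤ r ∧ |deriv ψ t| ≤ r) (hr : r < δ / 2)
    (hball : ∀ q ∈ Metric.ball (jet y x₀) δ,
      ‖fderiv ℝ F q‖ ≤ L ∧ partialThird (partialThird F) q ≤ B)
    (hnear : ∀ x ∈ Icc (x₀ - ε) (x₀ + ε), dist (jet y x) (jet y x₀) < δ / 2 ∧
      dist (partialThird F (jet y x)) (partialThird F (jet y x₀)) < η)
    (hε : 0 < ε) (hε₁ : ε ≤ 1) (ha : a ≤ x₀ - ε) (hb : x₀ + ε ≤ b) :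
    (∫ x in a..b, F (jet (y + localizedBump ψ x₀ ε) x)) - ∫ x in a..b, F (jet y x) ≤
      2 * ε * (L * (ε * r) + η * r) + B / 2 * ε * ∫ t in (-1)..1, deriv ψ t ^ 2 := by
  set φ := localizedBump ψ x₀ ε
  set s : ℝ → ℝ := fun x => deriv ψ ((x - x₀) / ε)
  have hu' (x : ℝ) : deriv (y + φ) x = deriv y x + s x :=
    ((hy.differentiable one_ne_zero x).hasDerivAt.add
      (hasDerivAt_localizedBump hε.ne' (hψ.differentiable one_ne_zero _))).deriv
  have hcont {u : ℝ → ℝ} (hu : ContDiff ℝ 1 u) : Continuous fun x => F (jet u x) :=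
    hF.continuous.comp hu.continuous_jet
  have hL : 0 ≤ L := by
    have := (hnear x₀ ⟨by linarith, by linarith⟩).1
    rw [dist_self] at this
    exact (norm_nonneg _).trans (hball _ (Metric.mem_ball_self (by linarith))).1
  have hu : ContDiff ℝ 1 (y + φ) := hy.add hψ.localizedBump
  rw [← intervalIntegral.integral_sub ((hcont hu).intervalIntegrable _ _)
      ((hcont hy).intervalIntegrable _ _),
    intervalIntegral.integral_eq_integral_of_eq_zero_of_notMem_Ioo ha hb fun x hx => by
      simp [jet, hu', s, φ, localizedBump_eq_zero hψ_zero hε hx,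
        hψ'_zero _ (one_le_abs_sub_div_of_notMem_Ioo hε hx)]]
  refine integral_le_of_le_comp_deriv hψ
    (by rw [hψ_zero (-1) (by simp), hψ_zero 1 (by simp)]) hε
    (((hcont hu).sub (hcont hy)).intervalIntegrable _ _)
    (C := partialThird F (jet y x₀)) fun x hx => ?_
  obtain ⟨hQx, hFQx⟩ := hnear x hx
  have hφx : |φ x| ≤ ε * r := by
    rw [show φ x = ε * ψ ((x - x₀) / ε) from rfl, abs_mul, abs_of_pos hε]
    exact mul_le_mul_of_nonneg_left (hψ_le _).1 hε.le
  have hsx : |s x| ≤ r := (hψ_le _).2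
  have hmain := sub_le_of_mem_ball hF hball hQx (θ := φ x) (σ := s x)
    (hφx.trans_lt (by nlinarith [(abs_nonneg _).trans (hψ_le 0).1])) (hsx.trans_lt hr)
  have hslope : (partialThird F (jet y x) - partialThird F (jet y x₀)) * s x ≤ η * r := by
    rw [Real.dist_eq] at hFQx
    refine (le_abs_self _).trans ?_
    rw [abs_mul]
    exact mul_le_mul hFQx.le hsx (abs_nonneg _) ((abs_nonneg _).trans hFQx.le)
  simp only [jet, s, Pi.add_apply, hu'] at hmain hslope ⊢
  nlinarith [mul_le_mul_of_nonneg_left hφx hL]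

theorem exists_integral_lt_of_partialThird_partialThird_neg {F : ℝ × ℝ × ℝ → ℝ}
    (hF : ContDiff ℝ 2 F) {y : ℝ → ℝ} (hy : ContDiff ℝ 1 y) {a b x₀ : ℝ} (hx₀ : x₀ ∈ Ioo a b)
    (hneg : partialThird (partialThird F) (jet y x₀) < 0) :
    ∃ u : ℝ → ℝ, ContDiff ℝ 1 u ∧ u a = y a ∧ u b = y b ∧
      ∫ x in a..b, F (jet u x) < ∫ x in a..b, F (jet y x) := by
  obtain ⟨B, hB₀, hB⟩ := exists_between hneg
  set L := ‖fderiv ℝ F (jet y x₀)‖ + 1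
  obtain ⟨δ, hδ, hball⟩ :=
    exists_ball_norm_fderiv_le_and_partialThird_partialThird_le hF (jet y x₀) hB₀
  obtain ⟨ψ, hψ, hψ_zero, hψ'_zero, hψ_le, hJ⟩ := exists_bump_profile (r := δ / 4) (by positivity)
  set J := ∫ t in (-1)..1, deriv ψ t ^ 2
  -- `η` and the bound on `ε` make `2ε (L ε δ/4 + η δ/4) + (B/2) ε J` negative.
  set η := -B * J / (2 * δ)
  have hη : 0 < η := div_pos (mul_pos (neg_pos.2 hB) hJ) (by positivity)
  have hbound : 0 < -B * J / (4 * L * δ) := div_pos (mul_pos (neg_pos.2 hB) hJ) (by positivity)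
  obtain ⟨ρ, hρ, hnear⟩ := Metric.eventually_nhds_iff.1
    ((hy.continuous_jet.tendsto x₀ |>.eventually (Metric.ball_mem_nhds _ (half_pos hδ))).and
      ((hF.partialThird (m := 1) le_rfl).continuous.comp hy.continuous_jet |>.tendsto x₀
        |>.eventually (Metric.ball_mem_nhds _ hη)))
  have hsmall : ∀ᶠ ε in 𝓝[>] (0 : ℝ),
      ε < 1 ∧ ε < ρ ∧ ε < x₀ - a ∧ ε < b - x₀ ∧ ε < -B * J / (4 * L * δ) :=
    nhdsWithin_le_nhds <| (eventually_lt_nhds one_pos).and <| (eventually_lt_nhds hρ).and <|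
      (eventually_lt_nhds (sub_pos.2 hx₀.1)).and <| (eventually_lt_nhds (sub_pos.2 hx₀.2)).and <|
      eventually_lt_nhds hbound
  obtain ⟨ε, ⟨hε₁, hερ, hεa, hεb, hεbound⟩, hε : 0 < ε⟩ := (hsmall.and self_mem_nhdsWithin).exists
  have ha : localizedBump ψ x₀ ε a = 0 :=
    localizedBump_eq_zero hψ_zero hε fun h => by linarith [h.1]
  have hb : localizedBump ψ x₀ ε b = 0 :=
    localizedBump_eq_zero hψ_zero hε fun h => by linarith [h.2]
  refine ⟨y + localizedBump ψ x₀ ε, hy.add hψ.localizedBump, by simp [ha], by simp [hb], ?_⟩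
  rw [← sub_neg]
  refine (integral_sub_le_of_localizedBump hF hy hψ hψ_zero hψ'_zero hψ_le (by linarith) hball
    (fun x hx => hnear (by
      rw [Real.dist_eq, abs_sub_lt_iff]; constructor <;> linarith [hx.1, hx.2]))
    hε hε₁.le (by linarith) (by linarith)).trans_lt ?_
  have hLεδ : L * ε * δ < -B * J / 4 := by
    rw [lt_div_iff₀ (by positivity)] at hεbound
    nlinarith
  have hηδ : η * δ = -B * J / 2 := by simp only [η]; field_simp
  nlinarith [mul_neg_of_neg_of_pos hB hJ]

/-- Legendre necessary condition: along a minimizer, f_pp ≥ 0. -/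
theorem legendre_necessary_condition (f : ℝ → ℝ → ℝ → ℝ)
    (hf : ContDiff ℝ 2 (fun q : ℝ × ℝ × ℝ => f q.1 q.2.1 q.2.2))
    (a b : ℝ) (hab : a < b) (y : ℝ → ℝ) (hy : ContDiff ℝ 2 y)
    (hmin : ∀ u : ℝ → ℝ, ContDiff ℝ 1 u → u a = y a → u b = y b →
      (∫ x in a..b, f x (y x) (deriv y x)) ≤ ∫ x in a..b, f x (u x) (deriv u x)) :
    ∀ x ∈ Set.Icc a b,
      0 ≤ deriv (fun p => deriv (fun p' => f x (y x) p') p) (deriv y x) := by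
  set F : ℝ × ℝ × ℝ → ℝ := fun q => f q.1 q.2.1 q.2.2
  have hy₁ : ContDiff ℝ 1 y := hy.of_le one_le_two
  have hG : Continuous fun x => partialThird (partialThird F) (jet y x) :=
    ((hf.partialThird (m := 1) le_rfl).partialThird (m := 0) le_rfl).continuous.comp
      hy₁.continuous_jet
  have hIoo : ∀ x ∈ Ioo a b, 0 ≤ partialThird (partialThird F) (jet y x) := by
    intro x₀ hx₀
    by_contra! hneg
    obtain ⟨u, hu, hua, hub, hlt⟩ :=
      exists_integral_lt_of_partialThird_partialThird_neg hf hy₁ hx₀ hneg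
    exact (hmin u hu hua hub).not_gt hlt
  intro x hx
  rw [deriv_deriv_eq_partialThird_partialThird hf]
  rw [← closure_Ioo hab.ne] at hx
  exact (isClosed_le continuous_const hG).closure_subset_iff.2 hIoo hx
end

section
/- Among regular n-gons with a fixed perimeter L > 0, the area A(n) = (L²/(4n))·cot(π/n) is strictly increasing in n for n ≥ 3. -/
open Real Set

/- Up to the factor L²/(4π), the area of the regular n-gon is f(π/n) with f(x) = x·cot x. On (0, π)
the derivative of f is (sin x cos x - x)/sin² x = (sin 2x - 2x)/(2 sin² x) < 0, so f is strictly
decreasing there, and π/n decreases in n. -/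

theorem Real.sin_mul_cos_lt {x : ℝ} (hx : 0 < x) : sin x * cos x < x := by
  have h := sin_lt (by positivity : 0 < 2 * x)
  rw [sin_two_mul] at h
  linarith

theorem Real.strictAntiOn_mul_cot : StrictAntiOn (fun x : ℝ => x * cot x) (Ioo 0 π) := by
  have hsin : ∀ x ∈ Ioo 0 π, sin x ≠ 0 := fun x hx => (sin_pos_of_pos_of_lt_pi hx.1 hx.2).ne'
  simp_rw [cot_eq_cos_div_sin, ← mul_div_assoc]
  refine strictAntiOn_of_hasDerivWithinAt_neg (convex_Ioo 0 π)
    ((continuous_id.mul continuous_cos).continuousOn.div continuous_sin.continuousOn hsin)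
    (fun x hx => (((hasDerivAt_id' x).mul (hasDerivAt_cos x)).div (hasDerivAt_sin x)
      (hsin x (interior_subset hx))).hasDerivWithinAt) fun x hx => ?_
  rw [interior_Ioo] at hx
  calc _ = (sin x * cos x - x) / sin x ^ 2 := by
        simp only [Pi.mul_apply]
        congr 1
        linear_combination (-x) * sin_sq_add_cos_sq x
    _ < 0 := div_neg_of_neg_of_pos (sub_neg.2 (sin_mul_cos_lt hx.1))
        (pow_pos (sin_pos_of_pos_of_lt_pi hx.1 hx.2) 2)

/-- Among regular n-gons of fixed perimeter L, the area (L²/(4n))·cot(π/n)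
is strictly increasing in n for n ≥ 3. -/
theorem regular_polygon_area_increasing (L : ℝ) (hL : 0 < L) :
    ∀ n : ℕ, 3 ≤ n →
      L ^ 2 / (4 * n) * Real.cot (π / n) <
        L ^ 2 / (4 * (n + 1)) * Real.cot (π / (n + 1)) := by
  intro n hn
  have hn3 : (3 : ℝ) ≤ n := by exact_mod_cast hn
  have harea_eq : ∀ m : ℝ, 0 < m →
      L ^ 2 / (4 * m) * cot (π / m) = L ^ 2 / (4 * π) * (π / m * cot (π / m)) := by
    intro m hm
    field_simp
  have hmem : ∀ m : ℝ, 1 < m → π / m ∈ Ioo 0 π := fun m hm =>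
    ⟨by positivity, div_lt_self pi_pos hm⟩
  rw [harea_eq n (by linarith), harea_eq (n + 1) (by linarith)]
  exact mul_lt_mul_of_pos_left
    (strictAntiOn_mul_cot (hmem _ (by linarith)) (hmem _ (by linarith))
      (div_lt_div_of_pos_left pi_pos (by linarith) (by linarith)))
    (by positivity)
end
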